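/- arXiv:1104.0791 — 2 statements merged into one kernel-verified Lean document; each statement's English description precedes it below -/
import Mathlib

section
/- Let H be a Hilbert space, L : D ⊆ H → H linear on a dense subspace D, and suppose (ψ_k)_{k≥1} ⊂ D and λ_k > 0 satisfy ⟨Lf, Lψ_k⟩ = λ_k ⟨f, ψ_k⟩ for all f ∈ D. Assume (φ_k) := (Lψ_k) is a complete system in H (its closed span is H), and (ψ'_j)_{j≥1} is a complete orthonormal system of the closure of N = {v ∈ D : Lv = 0}. If f ∈ D satisfies ⟨f, ψ_k⟩ = 0 for all k and ⟨f, ψ'_j⟩ = 0 for all j, then f = 0. -/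
open RealInnerProductSpace

/-- If `x` is orthogonal to a submodule `K`, it is orthogonal to every element
of its topological closure. -/
lemma orth_closure {H : Type*} [NormedAddCommGroup H] [InnerProductSpace ℝ H]
    {K : Submodule ℝ H} {x : H} (hx : x ∈ Kᗮ) {y : H}
    (hy : y ∈ K.topologicalClosure) : ⟪x, y⟫ = 0 := by
  have h1 : K.topologicalClosure ≤ Kᗮᗮ :=
    Submodule.topologicalClosure_minimal K (Submodule.le_orthogonal_orthogonal K)
      Kᗮ.isClosed_orthogonal
  exact (h1 hy x hx).symm ▸ ((h1 hy) x hx)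

/-- Completeness of the joint system (abstract step (5) of the proof of
Theorem `TExpansionBerezanskii`).  Let `L` be linear on a dense subspace `D`,
`(ψ k) ⊆ D` with `⟪Lf, Lψ_k⟫ = λ_k⟪f, ψ_k⟫` (λ_k > 0) for all `f ∈ D`; assume
the system `φ_k := Lψ_k` is complete in `H`, and `(ψ'_j)` is a complete
orthonormal system of the closure of `{v ∈ D : Lv = 0}`.  Then any `f ∈ D`
orthogonal to all `ψ_k` and all `ψ'_j` vanishes. -/
theorem stmt10 {H : Type*} [NormedAddCommGroup H] [InnerProductSpace ℝ H]
    (D : Submodule ℝ H) (hD : Dense (D : Set H)) (L : D →ₗ[ℝ] H)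
    (ψ : ℕ → D) (lam : ℕ → ℝ) (hlam : ∀ k, 0 < lam k)
    (hweak : ∀ (f : D) (k : ℕ), ⟪L f, L (ψ k)⟫ = lam k * ⟪(f : H), (ψ k : H)⟫)
    (hφcomplete :
      (Submodule.span ℝ (Set.range fun k => L (ψ k))).topologicalClosure = ⊤)
    (ψ' : ℕ → H) (hψ' : Orthonormal ℝ ψ')
    (hψ'mem : ∀ j, ψ' j ∈
      ((LinearMap.ker L).map D.subtype).topologicalClosure)
    (hψ'complete : (Submodule.span ℝ (Set.range ψ')).topologicalClosure =
      ((LinearMap.ker L).map D.subtype).topologicalClosure)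
    (f : D)
    (hfψ : ∀ k, ⟪(f : H), (ψ k : H)⟫ = 0)
    (hfψ' : ∀ j, ⟪(f : H), ψ' j⟫ = 0) :
    (f : H) = 0 := by
  -- Step 1: L f = 0
  have hLf0 : L f = 0 := by
    have horth : L f ∈ (Submodule.span ℝ (Set.range fun k => L (ψ k)))ᗮ := by
      rw [Submodule.mem_orthogonal]
      intro u hu
      induction hu using Submodule.span_induction with
      | mem u hu =>
          obtain ⟨k, rfl⟩ := hu
          rw [real_inner_comm, hweak f k, hfψ k, mul_zero]
      | zero => simp
      | add u v _ _ hu hv => rw [inner_add_left, hu, hv, add_zero]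
      | smul c u _ hu => rw [inner_smul_left, hu, mul_zero]
    have := orth_closure horth (y := L f) (by rw [hφcomplete]; trivial)
    exact inner_self_eq_zero.mp this
  -- Step 2: f ∈ closure of ker part
  have hfN : (f : H) ∈ ((LinearMap.ker L).map D.subtype).topologicalClosure := by
    apply Submodule.le_topologicalClosure
    exact ⟨f, hLf0, rfl⟩
  -- Step 3: f ⊥ all of N
  have horth' : (f : H) ∈ (Submodule.span ℝ (Set.range ψ'))ᗮ := by
    rw [Submodule.mem_orthogonal]
    intro u hu
    induction hu using Submodule.span_induction with
    | mem u hu =>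
        obtain ⟨j, rfl⟩ := hu
        rw [real_inner_comm]; exact hfψ' j
    | zero => simp
    | add u v _ _ hu hv => rw [inner_add_left, hu, hv, add_zero]
    | smul c u _ hu => rw [inner_smul_left, hu, mul_zero]
  have h0 : ⟪(f : H), (f : H)⟫ = 0 := by
    have := orth_closure horth' (y := (f : H)) (by rw [hψ'complete]; exact hfN)
    rwa [real_inner_comm] at this
  exact inner_self_eq_zero.mp h0
end

section
/- Let V be an (N+1)-dimensional inner-product space and S its sphere of radius r, i.e. S = {v ∈ V : ‖v‖ = r}. Then for every subspace F (of any ambient Hilbert space H containing V) with dim F ≤ N, sup_{v∈S} dist(v, F) ≥ r. -/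
/-! A vector of `V` orthogonal to `F` exists because the orthogonal projection onto `F`, restricted
to `V`, lowers the dimension and so has a nontrivial kernel. Scaled to norm `r`, such a vector
lies on the sphere, and its nearest point in `F` (its orthogonal projection) is `0`. -/

open Module Metric

namespace Submodule

variable {𝕜 E : Type*} [RCLike 𝕜] [NormedAddCommGroup E] [InnerProductSpace 𝕜 E]

theorem exists_mem_orthogonal_ne_zero_of_finrank_lt {V F : Submodule 𝕜 E}
    [FiniteDimensional 𝕜 V] [FiniteDimensional 𝕜 F] (h : finrank 𝕜 F < finrank 𝕜 V) :
    ∃ v ∈ V, v ∈ Fᗮ ∧ v ≠ 0 := by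
  have hker : LinearMap.ker (F.orthogonalProjectionOnto.toLinearMap ∘ₗ V.subtype) ≠ ⊥ :=
    LinearMap.ker_ne_bot_of_finrank_lt h
  obtain ⟨v, hv, hv0⟩ := exists_mem_ne_zero_of_ne_bot hker
  exact ⟨v, v.2, orthogonalProjectionOnto_eq_zero_iff.mp hv, by simpa using hv0⟩

theorem infDist_eq_norm_of_mem_orthogonal (F : Submodule 𝕜 E) [F.HasOrthogonalProjection]
    {v : E} (hv : v ∈ Fᗮ) : infDist v F = ‖v‖ := by
  rw [infDist_eq_iInf]
  simp_rw [dist_eq_norm]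
  have hmin := starProjection_minimal (U := F) v
  rw [F.starProjection_apply_eq_zero_iff.mpr hv, sub_zero] at hmin
  exact hmin.symm

theorem infDist_le_norm (F : Submodule 𝕜 E) (v : E) : infDist v F ≤ ‖v‖ := by
  simpa using infDist_le_dist_of_mem (x := v) F.zero_mem

end Submodule

open Submodule

/-- An `N`-dimensional subspace cannot approximate the radius-`r` sphere of an
`(N+1)`-dimensional subspace better than `r`:
`sup_{v ∈ V, ‖v‖ = r} dist(v, F) ≥ r`. -/
theorem stmt14 {H : Type*} [NormedAddCommGroup H] [InnerProductSpace ℝ H]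
    (N : ℕ) (V : Submodule ℝ H) [FiniteDimensional ℝ V]
    (hV : Module.finrank ℝ V = N + 1)
    (r : ℝ) (hr : 0 ≤ r)
    (F : Submodule ℝ H) [FiniteDimensional ℝ F] (hF : Module.finrank ℝ F ≤ N) :
    r ≤ sSup ((fun v => Metric.infDist v (F : Set H)) ''
      {v : H | v ∈ V ∧ ‖v‖ = r}) := by
  obtain ⟨v, hvV, hvF, hv0⟩ :=
    exists_mem_orthogonal_ne_zero_of_finrank_lt (V := V) (F := F) (by omega)
  set w := (r * ‖v‖⁻¹) • v
  have hw : ‖w‖ = r := norm_smul_inv_norm' hr hv0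
  have hbdd : BddAbove ((fun v => infDist v (F : Set H)) '' {v : H | v ∈ V ∧ ‖v‖ = r}) := by
    refine ⟨r, ?_⟩
    rintro _ ⟨u, ⟨-, hu⟩, rfl⟩
    exact hu ▸ F.infDist_le_norm u
  calc r = infDist w F := by rw [F.infDist_eq_norm_of_mem_orthogonal (Fᗮ.smul_mem _ hvF), hw]
    _ ≤ _ := le_csSup hbdd ⟨w, ⟨V.smul_mem _ hvV, hw⟩, rfl⟩
end
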